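/- arXiv:1601.07092 — 2 statements merged into one kernel-verified Lean document; each statement's English description precedes it below -/
import Mathlib

section
/- For the Z(N)-Ising model masses m_α = m₁ · sin(απ/N)/sin(π/N), if α + β < N then m_α sinh(ζ + i·βπ/N) + m_β sinh(ζ − i·απ/N) = m_{α+β} sinh(ζ) for all complex ζ. -/
open Complex

lemma sinh_fusion_key (a b ζ : ℂ) :
    Complex.sin a * Complex.sinh (ζ + I * b) + Complex.sin b * Complex.sinh (ζ - I * a)
      = Complex.sin (a + b) * Complex.sinh ζ := by
  have h1 : ζ + I * b = ζ + b * I := by ring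
  have h2 : ζ - I * a = ζ + (-a) * I := by ring
  rw [h1, h2, Complex.sinh_add, Complex.sinh_add, Complex.sinh_mul_I, Complex.cosh_mul_I,
    Complex.sinh_mul_I, Complex.cosh_mul_I, Complex.sin_neg, Complex.cos_neg, Complex.sin_add]
  ring

/-- Momentum component of the fusion relation for the Z(N)-Ising model masses. -/
theorem zn_ising_mass_sinh_fusion (N : ℕ) (hN : 3 ≤ N) (m1 : ℝ) (hm : 0 < m1)
    (α β : ℕ) (hα : 1 ≤ α) (hβ : 1 ≤ β) (hab : α + β < N) (ζ : ℂ) :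
    ((m1 * Real.sin (α * Real.pi / N) / Real.sin (Real.pi / N) : ℝ) : ℂ) *
        Complex.sinh (ζ + Complex.I * β * Real.pi / N)
      + ((m1 * Real.sin (β * Real.pi / N) / Real.sin (Real.pi / N) : ℝ) : ℂ) *
        Complex.sinh (ζ - Complex.I * α * Real.pi / N)
      = ((m1 * Real.sin ((α + β) * Real.pi / N) / Real.sin (Real.pi / N) : ℝ) : ℂ) *
        Complex.sinh ζ := by
  have hkey := sinh_fusion_key ((α : ℂ) * Real.pi / N) ((β : ℂ) * Real.pi / N) ζ
  have e1 : ζ + Complex.I * β * Real.pi / N = ζ + I * ((β : ℂ) * Real.pi / N) := by ring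
  have e2 : ζ - Complex.I * α * Real.pi / N = ζ - I * ((α : ℂ) * Real.pi / N) := by ring
  have e3 : (α : ℂ) * Real.pi / N + (β : ℂ) * Real.pi / N = ((α + β : ℕ) : ℂ) * Real.pi / N := by
    push_cast; ring
  rw [e1, e2] 
  have hs : ∀ x : ℝ, ((Real.sin x : ℝ) : ℂ) = Complex.sin (x : ℂ) := fun x =>
    (Complex.ofReal_sin x).symm ▸ rfl
  push_cast [Complex.ofReal_sin]
  rw [show ((α : ℂ) + β) * (Real.pi : ℂ) / N = (α : ℂ) * Real.pi / N + (β : ℂ) * Real.pi / N by ring]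
  linear_combination ((m1 : ℂ) / Complex.sin ((Real.pi : ℂ) / N)) * hkey
end

section
/- CPT invariance of the composite S-matrix: under the bootstrap consistency hypothesis ∏_{j=0}^{N−1} S(ζ + 2πij/N) = 1, the product-form elements satisfy S^{(N−k)(N−ℓ)}(ζ) = S^{kℓ}(ζ) for 1 ≤ k, ℓ ≤ N−1. -/
/-- The composite S-matrix element S^{kℓ} built from a single function S. -/
noncomputable def Sprod (S : ℂ → ℂ) (N k ℓ : ℕ) (ζ : ℂ) : ℂ :=
  ∏ a ∈ Finset.range ℓ, ∏ b ∈ Finset.range k,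
    S (ζ + Real.pi * Complex.I * (((2 * (a : ℤ) + 1 - ℓ) + (2 * (b : ℤ) + 1 - k) : ℤ) : ℂ) / N)

/-- CPT invariance of the composite S-matrix elements: S^{(N−k)(N−ℓ)}(ζ) = S^{kℓ}(ζ)
under the bootstrap consistency hypothesis (and 2πi-periodicity of S). -/
theorem sprod_CPT (S : ℂ → ℂ) (N : ℕ) (hN : 3 ≤ N) (k ℓ : ℕ)
    (hk1 : 1 ≤ k) (hkN : k ≤ N - 1) (hℓ1 : 1 ≤ ℓ) (hℓN : ℓ ≤ N - 1)
    (hS : ∀ ζ : ℂ, ∏ j ∈ Finset.range N, S (ζ + 2 * Real.pi * Complex.I * j / N) = 1)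
    (hper : ∀ ζ : ℂ, S (ζ + 2 * Real.pi * Complex.I) = S ζ)
    (ζ : ℂ) :
    Sprod S N (N - k) (N - ℓ) ζ = Sprod S N k ℓ ζ := by
  have hkN' : k ≤ N := by omega
  have hℓN' : ℓ ≤ N := by omega
  have hNc : (N : ℂ) ≠ 0 := Nat.cast_ne_zero.mpr (by omega)
  set f : ℤ → ℂ := fun m => S (ζ + Real.pi * Complex.I * (m : ℂ) / N) with hf
  have hf_per : ∀ m : ℤ, f (m + 2 * N) = f m := by
    intro m
    have h1 : ζ + Real.pi * Complex.I * ((m + 2 * N : ℤ) : ℂ) / N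
        = (ζ + Real.pi * Complex.I * (m : ℂ) / N) + 2 * Real.pi * Complex.I := by
      push_cast
      field_simp
      ring
    simp only [hf]
    rw [h1, hper]
  have hboot : ∀ m : ℤ, ∏ j ∈ Finset.range N, f (m + 2 * j) = 1 := by
    intro m
    rw [← hS (ζ + Real.pi * Complex.I * (m : ℂ) / N)]
    refine Finset.prod_congr rfl fun j _ => ?_
    simp only [hf]
    congr 1
    push_cast
    field_simp
    ring
  set g : ℕ → ℤ → ℂ := fun κ x => ∏ b ∈ Finset.range κ, f (x + 2 * b + 1 - κ) with hg
  have hg_per : ∀ (κ : ℕ) (x : ℤ), g κ (x + 2 * N) = g κ x := by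
    intro κ x
    refine Finset.prod_congr rfl fun b _ => ?_
    rw [show x + 2 * N + 2 * (b : ℤ) + 1 - κ = (x + 2 * b + 1 - κ) + 2 * N from by ring,
      hf_per]
  have hgN : ∀ x : ℤ, g N x = 1 := by
    intro x
    rw [← hboot (x + 1 - N)]
    refine Finset.prod_congr rfl fun b _ => ?_
    congr 1
    ring
  have hsplit : ∀ x : ℤ, g k (x + k - N) * g (N - k) (x + k) = 1 := by
    intro x
    have h1 := Finset.prod_range_add (fun b : ℕ => f (x + 2 * b + 1 - N)) k (N - k)
    rw [show k + (N - k) = N from by omega] at h1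
    have h2 : g N x = g k (x + k - N) * g (N - k) (x + k) := by
      rw [show g N x = ∏ b ∈ Finset.range N, f (x + 2 * b + 1 - N) from rfl, h1]
      congr 1
      · refine Finset.prod_congr rfl fun b _ => ?_
        congr 1
        ring
      · refine Finset.prod_congr rfl fun c _ => ?_
        congr 1
        push_cast [Nat.cast_sub hkN']
        ring
    rw [← h2, hgN]
  have hE : ∀ y : ℤ, g (N - k) y = (g k (y - N))⁻¹ := by
    intro y
    have h1 := hsplit (y - k)
    rw [show y - (k : ℤ) + k - N = y - N from by ring,
      show y - (k : ℤ) + k = y from by ring] at h1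
    exact (inv_eq_of_mul_eq_one_right h1).symm
  have hD : ∀ x : ℤ, ∏ a ∈ Finset.range N, g k (x + 2 * a + 1 - N) = 1 := by
    intro x
    simp only [hg]
    rw [Finset.prod_comm]
    refine Finset.prod_eq_one fun b _ => ?_
    rw [← hboot (x + 2 * b + 2 - N - k)]
    refine Finset.prod_congr rfl fun a _ => ?_
    congr 1
    ring
  -- Express both sides via g
  have hLHS : Sprod S N (N - k) (N - ℓ) ζ
      = ∏ a ∈ Finset.range (N - ℓ), g (N - k) (2 * a + 1 - (N - ℓ : ℕ)) := by
    refine Finset.prod_congr rfl fun a _ => Finset.prod_congr rfl fun b _ => ?_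
    simp only [hf]
    congr 2
    push_cast
    ring
  have hRHS : Sprod S N k ℓ ζ = ∏ a ∈ Finset.range ℓ, g k (2 * a + 1 - ℓ) := by
    refine Finset.prod_congr rfl fun a _ => Finset.prod_congr rfl fun b _ => ?_
    simp only [hf]
    congr 2
    push_cast
    ring
  -- The product over the complementary range
  have hPQ : Sprod S N k ℓ ζ * (∏ c ∈ Finset.range (N - ℓ), g k (2 * c + 1 + ℓ)) = 1 := by
    rw [hRHS]
    have h1 := Finset.prod_range_add (fun a : ℕ => g k ((N : ℤ) - ℓ + 2 * a + 1 - N)) ℓ (N - ℓ)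
    rw [show ℓ + (N - ℓ) = N from by omega, hD ((N : ℤ) - ℓ)] at h1
    have e1 : ∏ a ∈ Finset.range ℓ, g k (2 * (a : ℤ) + 1 - ℓ)
        = ∏ x ∈ Finset.range ℓ, g k ((N : ℤ) - ℓ + 2 * x + 1 - N) :=
      Finset.prod_congr rfl fun a _ => by congr 1; ring
    have e2 : ∏ c ∈ Finset.range (N - ℓ), g k (2 * (c : ℤ) + 1 + ℓ)
        = ∏ x ∈ Finset.range (N - ℓ), g k ((N : ℤ) - ℓ + 2 * ((ℓ + x : ℕ) : ℤ) + 1 - N) :=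
      Finset.prod_congr rfl fun c _ => by congr 1; push_cast; ring
    rw [e1, e2]
    exact h1.symm
  rw [hLHS]
  have h2 : ∀ a ∈ Finset.range (N - ℓ),
      g (N - k) (2 * (a : ℤ) + 1 - (N - ℓ : ℕ)) = (g k (2 * a + 1 + ℓ))⁻¹ := by
    intro a _
    rw [hE]
    congr 1
    rw [← hg_per k (2 * (a : ℤ) + 1 - (N - ℓ : ℕ) - N)]
    congr 1
    push_cast [Nat.cast_sub hℓN']
    ring
  rw [Finset.prod_congr rfl h2, Finset.prod_inv_distrib]
  rw [mul_comm] at hPQ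
  exact inv_eq_of_mul_eq_one_right hPQ
end
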